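/- Let G be the group with presentation ⟨ρ, τ, σ | (ρτ)² = 1, σ² = 1, ρτ = τρ, σρ = τσ⟩. Then the subgroup H of G generated by ρ², σ, and ρτ has index 2 in G, and H is isomorphic to the direct product D∞ × ℤ/2ℤ of the infinite dihedral group with a cyclic group of order 2. (In Example 6.8, H is the quasi-automorphism group of the cluster algebra of the annulus with two marked points on each boundary component, realized as the kernel of the parity map G → ℤ/2ℤ.) -/

import Mathlib

/-!
The element `z = ρτ` is central of order two: `σ` conjugates `ρ` to `τ`, and `ρ`, `τ` commute.
Conjugation by `ρ` preserves `H = ⟨ρ², σ, z⟩` (as `ρσρ⁻¹ = σρ⁻²z`) and `ρ² ∈ H`, so `H ∪ ρH` is a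
subgroup containing the generators. The parity map (`ρ, τ ↦ 1`, `σ ↦ 0`) kills `H` but not `ρ`, so
`H` is its kernel and has index two.

The assignment `r ↦ ρ²`, `s ↦ σ`, `1 ↦ z` defines `D∞ × ℤ/2ℤ → G` with image `H`. It is injective:
the map `G → Dih(ℤ)` with `ρ ↦ r 1`, `τ ↦ r (-1)`, `σ ↦ sr 0` kills `z` and restricts to the
doubling map on `D∞ ≅ Dih(ℤ)`, while `z ≠ 1` because the parity map lifts to `ℤ/4ℤ`, where it
sends `z` to `2`.
-/

namespace ClusterModularAnnulus

/-- Relators of the presentation `⟨ρ, τ, σ | (ρτ)² = 1, σ² = 1, ρτ = τρ, σρ = τσ⟩`,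
with `ρ, τ, σ` the generators `0, 1, 2`. -/
def annulusRels : Set (FreeGroup (Fin 3)) :=
  { (FreeGroup.of 0 * FreeGroup.of 1) ^ 2,
    (FreeGroup.of 2) ^ 2,
    FreeGroup.of 0 * FreeGroup.of 1 * (FreeGroup.of 0)⁻¹ * (FreeGroup.of 1)⁻¹,
    FreeGroup.of 2 * FreeGroup.of 0 * (FreeGroup.of 1 * FreeGroup.of 2)⁻¹ }

/-- Relators of the infinite dihedral group `D∞ = ⟨r, s | s² = 1, (sr)² = 1⟩`, with
`r, s` the generators `0, 1`. -/
def dihedralInfRels : Set (FreeGroup (Fin 2)) :=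
  { (FreeGroup.of 1) ^ 2, (FreeGroup.of 1 * FreeGroup.of 0) ^ 2 }

/-- The cluster modular group of the annulus with two marked points on each boundary
component (Example 6.8). -/
abbrev G := PresentedGroup annulusRels

/-- The infinite dihedral group. -/
abbrev Dinf := PresentedGroup dihedralInfRels

def ρ : G := PresentedGroup.of 0
def τ : G := PresentedGroup.of 1
def σ : G := PresentedGroup.of 2

end ClusterModularAnnulus

theorem Subgroup.mem_or_inv_mul_mem_of_mem_closure_insert {Γ : Type*} [Group Γ]
    {K : Subgroup Γ} {x : Γ} (hconj : ∀ k ∈ K, x * k * x⁻¹ ∈ K) (hsq : x ^ 2 ∈ K) {g : Γ}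
    (hg : g ∈ Subgroup.closure (insert x (K : Set Γ))) : g ∈ K ∨ x⁻¹ * g ∈ K := by
  have hconj' : ∀ k ∈ K, x⁻¹ * k * x ∈ K := fun k hk => by
    have : x⁻¹ * k * x = (x ^ 2)⁻¹ * (x * k * x⁻¹) * x ^ 2 := by group
    rw [this]
    exact K.mul_mem (K.mul_mem (K.inv_mem hsq) (hconj k hk)) hsq
  induction hg using Subgroup.closure_induction with
  | mem g hg =>
    rcases hg with rfl | hg
    · exact Or.inr (by simp)
    · exact Or.inl hg
  | one => exact Or.inl K.one_mem
  | mul a b _ _ ha hb =>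
    rcases ha with ha | ha <;> rcases hb with hb | hb
    · exact Or.inl (K.mul_mem ha hb)
    · exact Or.inr (by
        rw [show x⁻¹ * (a * b) = x⁻¹ * a * x * (x⁻¹ * b) by group]
        exact K.mul_mem (hconj' a ha) hb)
    · exact Or.inr (by rw [← mul_assoc]; exact K.mul_mem ha hb)
    · exact Or.inl (by
        rw [show a * b = x ^ 2 * (x⁻¹ * (x⁻¹ * a) * x) * (x⁻¹ * b) by group]
        exact K.mul_mem (K.mul_mem hsq (hconj' _ ha)) hb)
  | inv a _ ha =>
    rcases ha with ha | ha
    · exact Or.inl (K.inv_mem ha)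
    · exact Or.inr (by
        rw [show x⁻¹ * a⁻¹ = x⁻¹ * (x⁻¹ * a)⁻¹ * x * (x ^ 2)⁻¹ by group]
        exact K.mul_mem (hconj' _ (K.inv_mem ha)) (K.inv_mem hsq))

def DihedralGroup.mapOfAddHom {m n : ℕ} (e : ZMod m →+ ZMod n) :
    DihedralGroup m →* DihedralGroup n where
  toFun
    | .r i => .r (e i)
    | .sr i => .sr (e i)
  map_one' := congrArg DihedralGroup.r (map_zero e)
  map_mul' := by
    rintro (i | i) (j | j) <;>
      simp [DihedralGroup.r_mul_r, DihedralGroup.r_mul_sr, DihedralGroup.sr_mul_r,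
        DihedralGroup.sr_mul_sr]

lemma DihedralGroup.mapOfAddHom_injective {m n : ℕ} {e : ZMod m →+ ZMod n}
    (he : Function.Injective e) : Function.Injective (mapOfAddHom e) := by
  rintro (i | i) (j | j) h
  · exact congrArg _ (he (DihedralGroup.r.inj h))
  · cases h
  · cases h
  · exact congrArg _ (he (DihedralGroup.sr.inj h))

lemma Multiplicative.zmod_two_eq_one_or_ofAdd_one (b : Multiplicative (ZMod 2)) :
    b = 1 ∨ b = Multiplicative.ofAdd 1 := by
  revert b; decide

namespace ClusterModularAnnulus

open PresentedGroup

lemma ρ_mul_τ_sq : (ρ * τ) ^ 2 = 1 :=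
  one_of_mem (rels := annulusRels) (by simp [annulusRels])

lemma σ_sq : σ ^ 2 = 1 :=
  one_of_mem (rels := annulusRels) (by simp [annulusRels])

lemma commute_ρ_τ : Commute ρ τ := by
  have : ρ * τ * ρ⁻¹ * τ⁻¹ = 1 := one_of_mem (rels := annulusRels) (by simp [annulusRels])
  rwa [mul_inv_eq_one, mul_inv_eq_iff_eq_mul] at this

lemma σ_mul_ρ : σ * ρ = τ * σ := by
  have : σ * ρ * (τ * σ)⁻¹ = 1 := one_of_mem (rels := annulusRels) (by simp [annulusRels])
  rwa [mul_inv_eq_one] at this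

lemma σ_mul_ρ_mul_σ : σ * ρ * σ = τ := by rw [σ_mul_ρ, mul_assoc, ← sq, σ_sq, mul_one]

lemma σ_mul_τ : σ * τ = ρ * σ := by
  rw [← σ_mul_ρ_mul_σ, ← mul_assoc, ← mul_assoc, ← sq, σ_sq, one_mul]

lemma ρ_mul_τ_mem_center : ρ * τ ∈ Subgroup.center G := by
  refine Subgroup.mem_center_iff.mpr fun g => ?_
  refine Subgroup.mem_centralizer_singleton_iff.mp
    (generated_by _ (Subgroup.centralizer {ρ * τ}) (fun j => ?_) g)
  rw [Subgroup.mem_centralizer_singleton_iff]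
  fin_cases j
  · change ρ * (ρ * τ) = ρ * τ * ρ
    rw [mul_assoc, ← commute_ρ_τ.eq]
  · change τ * (ρ * τ) = ρ * τ * τ
    rw [← mul_assoc, ← commute_ρ_τ.eq]
  · change σ * (ρ * τ) = ρ * τ * σ
    rw [← mul_assoc, σ_mul_ρ, mul_assoc, σ_mul_τ, ← mul_assoc, ← commute_ρ_τ.eq, mul_assoc]

abbrev quasiAut : Subgroup G := Subgroup.closure {ρ ^ 2, σ, ρ * τ}

lemma ρ_sq_mem_quasiAut : ρ ^ 2 ∈ quasiAut := Subgroup.subset_closure (by simp)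
lemma σ_mem_quasiAut : σ ∈ quasiAut := Subgroup.subset_closure (by simp)
lemma ρ_mul_τ_mem_quasiAut : ρ * τ ∈ quasiAut := Subgroup.subset_closure (by simp)

lemma ρ_mul_σ_mul_ρ_inv : ρ * σ * ρ⁻¹ = σ * (ρ ^ 2)⁻¹ * (ρ * τ) := by
  rw [← σ_mul_τ, mul_assoc, commute_ρ_τ.symm.inv_right.eq]; group

lemma conj_ρ_mem_quasiAut {h : G} (hh : h ∈ quasiAut) : ρ * h * ρ⁻¹ ∈ quasiAut := by
  suffices quasiAut ≤ quasiAut.comap (MulAut.conj ρ).toMonoidHom from this hh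
  rw [Subgroup.closure_le]
  rintro _ (rfl | rfl | rfl) <;>
    simp only [SetLike.mem_coe, Subgroup.mem_comap, MulEquiv.coe_toMonoidHom, MulAut.conj_apply]
  · rw [show ρ * ρ ^ 2 * ρ⁻¹ = ρ ^ 2 by group]
    exact ρ_sq_mem_quasiAut
  · rw [ρ_mul_σ_mul_ρ_inv]
    exact quasiAut.mul_mem (quasiAut.mul_mem σ_mem_quasiAut (quasiAut.inv_mem ρ_sq_mem_quasiAut))
      ρ_mul_τ_mem_quasiAut
  · rw [(Subgroup.mem_center_iff.mp ρ_mul_τ_mem_center ρ), mul_inv_cancel_right]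
    exact ρ_mul_τ_mem_quasiAut

lemma mem_quasiAut_or_inv_ρ_mul_mem (g : G) : g ∈ quasiAut ∨ ρ⁻¹ * g ∈ quasiAut := by
  refine Subgroup.mem_or_inv_mul_mem_of_mem_closure_insert (fun _ => conj_ρ_mem_quasiAut)
    ρ_sq_mem_quasiAut (generated_by _ _ (fun j => ?_) g)
  fin_cases j
  · exact Subgroup.subset_closure (Set.mem_insert _ _)
  · change τ ∈ _
    rw [show τ = ρ⁻¹ * (ρ * τ) by group]
    exact Subgroup.mul_mem _ (Subgroup.inv_mem _ (Subgroup.subset_closure (Set.mem_insert _ _)))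
      (Subgroup.subset_closure (Set.mem_insert_of_mem _ ρ_mul_τ_mem_quasiAut))
  · exact Subgroup.subset_closure (Set.mem_insert_of_mem _ σ_mem_quasiAut)

def rotationNumber (n : ℕ) (hn : (4 : ZMod n) = 0) : G →* Multiplicative (ZMod n) :=
  toGroup (f := ![Multiplicative.ofAdd 1, Multiplicative.ofAdd 1, 1]) <| by
    rintro _ (rfl | rfl | rfl | rfl)
    · simp only [map_pow, map_mul, FreeGroup.lift_apply_of, Matrix.cons_val_zero,
        Matrix.cons_val_one]
      rw [← ofAdd_add, ← ofAdd_nsmul, ← ofAdd_zero, ← hn]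
      norm_num
    all_goals simp

section rotationNumber

variable {n : ℕ} (hn : (4 : ZMod n) = 0)

lemma rotationNumber_ρ : rotationNumber n hn ρ = Multiplicative.ofAdd 1 := toGroup.of _
lemma rotationNumber_τ : rotationNumber n hn τ = Multiplicative.ofAdd 1 := toGroup.of _
lemma rotationNumber_σ : rotationNumber n hn σ = 1 := toGroup.of _

lemma rotationNumber_surjective : Function.Surjective (rotationNumber n hn) := fun x =>
  ⟨ρ ^ ((Multiplicative.toAdd x).cast : ℤ), by
    rw [map_zpow, rotationNumber_ρ, ← ofAdd_zsmul, zsmul_one, ZMod.intCast_zmod_cast]; rfl⟩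

end rotationNumber

/-- The parity map `G → ℤ/2ℤ` of the paper. -/
def parity : G →* Multiplicative (ZMod 2) := rotationNumber 2 (by decide)

lemma quasiAut_eq_ker_parity : quasiAut = parity.ker := by
  have : quasiAut ≤ parity.ker := by
    rw [Subgroup.closure_le]
    rintro _ (rfl | rfl | rfl) <;>
      simp only [SetLike.mem_coe, MonoidHom.mem_ker, map_mul, map_pow, parity, rotationNumber_ρ,
        rotationNumber_τ, rotationNumber_σ] <;> decide
  refine le_antisymm this fun g hg => ?_
  refine (mem_quasiAut_or_inv_ρ_mul_mem g).resolve_right fun h => ?_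
  have h' := MonoidHom.mem_ker.mp (this h)
  rw [map_mul, map_inv, MonoidHom.mem_ker.mp hg, parity, rotationNumber_ρ] at h'
  exact absurd h' (by decide)

theorem index_quasiAut : quasiAut.index = 2 := by
  have surj : Function.Surjective parity := rotationNumber_surjective _
  rw [quasiAut_eq_ker_parity, Subgroup.index_ker, MonoidHom.range_eq_top.mpr surj,
    Subgroup.card_top, Nat.card_eq_fintype_card]
  rfl

namespace Dinf

def r : Dinf := of 0
def s : Dinf := of 1

lemma s_sq : s ^ 2 = 1 := one_of_mem (rels := dihedralInfRels) (by simp [dihedralInfRels])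

lemma s_mul_r_sq : (s * r) ^ 2 = 1 :=
  one_of_mem (rels := dihedralInfRels) (by simp [dihedralInfRels])

lemma s_mul_zpow_r (i : ℤ) : s * r ^ i = r ^ (-i) * s := by
  have : SemiconjBy s r r⁻¹ := by
    have s_inv : s⁻¹ = s := inv_eq_of_mul_eq_one_right (by rw [← sq, s_sq])
    rw [SemiconjBy, eq_inv_of_mul_eq_one_left (a := s * r) (by rw [← sq, s_mul_r_sq]),
      mul_inv_rev, s_inv]
  rw [(this.zpow_right i).eq, inv_zpow']

def toDihedral : Dinf →* DihedralGroup 0 :=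
  toGroup (f := ![DihedralGroup.r 1, DihedralGroup.sr 0]) <| by
    rintro _ (rfl | rfl) <;> simp [sq, DihedralGroup.sr_mul_r, DihedralGroup.sr_mul_sr]

-- `ZMod 0` is `ℤ` by definition.
def ofDihedral : DihedralGroup 0 →* Dinf where
  toFun
    | .r i => r ^ (show ℤ from i)
    | .sr i => s * r ^ (show ℤ from i)
  map_one' := zpow_zero r
  map_mul' := by
    have zpow_mul_s (i : ℤ) : r ^ i * s = s * r ^ (-i) := by rw [s_mul_zpow_r, neg_neg]
    have sub_eq (i j : ℤ) : r ^ (j - i) = r ^ (-i) * r ^ j := by rw [← zpow_add, neg_add_eq_sub]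
    rintro (i | i) (j | j)
    · exact zpow_add r (show ℤ from i) j
    · change s * r ^ ((show ℤ from j) - (show ℤ from i)) = _
      rw [sub_eq, ← mul_assoc, ← mul_assoc, ← zpow_mul_s]
    · exact (congrArg (s * ·) (zpow_add r (show ℤ from i) j)).trans (mul_assoc _ _ _).symm
    · change r ^ ((show ℤ from j) - (show ℤ from i)) = _
      rw [sub_eq, ← mul_assoc, mul_assoc s, zpow_mul_s, ← mul_assoc, ← sq, s_sq, one_mul]

lemma toDihedral_r : toDihedral r = DihedralGroup.r 1 := toGroup.of _
lemma toDihedral_s : toDihedral s = DihedralGroup.sr 0 := toGroup.of _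

lemma toDihedral_injective : Function.Injective toDihedral := by
  have : ofDihedral.comp toDihedral = MonoidHom.id Dinf := by
    refine ext fun j => ?_
    fin_cases j
    · exact (congrArg ofDihedral toDihedral_r).trans (zpow_one r)
    · exact (congrArg ofDihedral toDihedral_s).trans
        ((congrArg (s * ·) (zpow_zero r)).trans (mul_one s))
  exact Function.LeftInverse.injective (g := ofDihedral) (DFunLike.congr_fun this)

end Dinf

lemma ρ_mul_τ_ne_one : ρ * τ ≠ 1 := fun h => by
  have := congrArg (rotationNumber 4 (by decide)) h
  rw [map_mul, rotationNumber_ρ, rotationNumber_τ, MonoidHom.map_one] at this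
  exact absurd this (by decide)

lemma σ_mul_ρ_sq_sq : (σ * ρ ^ 2) ^ 2 = 1 := by
  have σ_inv : σ⁻¹ = σ := inv_eq_of_mul_eq_one_right (by rw [← sq, σ_sq])
  calc (σ * ρ ^ 2) ^ 2 = σ * ρ ^ 2 * σ⁻¹ * ρ ^ 2 := by rw [σ_inv, sq]; simp only [mul_assoc]
    _ = (τ * ρ) ^ 2 := by
      rw [← conj_pow, σ_inv, σ_mul_ρ_mul_σ, commute_ρ_τ.symm.mul_pow]
    _ = 1 := by rw [← commute_ρ_τ.eq, ρ_mul_τ_sq]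

def dinfToG : Dinf →* G :=
  toGroup (f := ![ρ ^ 2, σ]) <| by
    rintro _ (rfl | rfl) <;> simp [σ_sq, σ_mul_ρ_sq_sq]

def zmodTwoToG : Multiplicative (ZMod 2) →* G :=
  AddMonoidHom.toMultiplicativeLeft <| ZMod.lift 2
    ⟨zmultiplesHom _ (Additive.ofMul (ρ * τ)), by
      rw [zmultiplesHom_apply, ← ofMul_zpow, zpow_natCast, ρ_mul_τ_sq, ofMul_one]⟩

lemma zmodTwoToG_ofAdd_one : zmodTwoToG (Multiplicative.ofAdd 1) = ρ * τ := by
  change Additive.toMul (ZMod.lift 2 _ ((1 : ℤ) : ZMod 2)) = ρ * τ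
  rw [ZMod.lift_coe, zmultiplesHom_apply, one_zsmul]
  rfl

lemma zmodTwoToG_mem_center (b : Multiplicative (ZMod 2)) :
    zmodTwoToG b ∈ Subgroup.center G := by
  obtain rfl | rfl := Multiplicative.zmod_two_eq_one_or_ofAdd_one b
  · rw [map_one]; exact Subgroup.one_mem _
  · rw [zmodTwoToG_ofAdd_one]; exact ρ_mul_τ_mem_center

def prodToG : Dinf × Multiplicative (ZMod 2) →* G :=
  dinfToG.noncommCoprod zmodTwoToG fun a b =>
    Subgroup.mem_center_iff.mp (zmodTwoToG_mem_center b) (dinfToG a)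

lemma prodToG_apply (a : Dinf) (b : Multiplicative (ZMod 2)) :
    prodToG (a, b) = dinfToG a * zmodTwoToG b := rfl

lemma dinfToG_r : dinfToG Dinf.r = ρ ^ 2 := toGroup.of _
lemma dinfToG_s : dinfToG Dinf.s = σ := toGroup.of _

lemma range_prodToG : prodToG.range = quasiAut := by
  refine le_antisymm ?_ ?_
  · rintro _ ⟨⟨a, b⟩, rfl⟩
    refine quasiAut.mul_mem ?_ ?_
    · refine generated_by _ (quasiAut.comap dinfToG) (fun j => ?_) a
      fin_cases j
      · exact (congrArg (· ∈ quasiAut) dinfToG_r).mpr ρ_sq_mem_quasiAut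
      · exact (congrArg (· ∈ quasiAut) dinfToG_s).mpr σ_mem_quasiAut
    · obtain rfl | rfl := Multiplicative.zmod_two_eq_one_or_ofAdd_one b
      · rw [map_one]; exact quasiAut.one_mem
      · rw [zmodTwoToG_ofAdd_one]; exact ρ_mul_τ_mem_quasiAut
  · rw [Subgroup.closure_le]
    rintro _ (rfl | rfl | rfl)
    · exact ⟨(Dinf.r, 1), by rw [prodToG_apply, dinfToG_r, map_one, mul_one]⟩
    · exact ⟨(Dinf.s, 1), by rw [prodToG_apply, dinfToG_s, map_one, mul_one]⟩
    · exact ⟨(1, .ofAdd 1), by rw [prodToG_apply, zmodTwoToG_ofAdd_one, map_one, one_mul]⟩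

def toDihedralGroup : G →* DihedralGroup 0 :=
  toGroup (f := ![DihedralGroup.r 1, DihedralGroup.r (-1), DihedralGroup.sr 0]) <| by
    rintro _ (rfl | rfl | rfl | rfl) <;>
      simp [sq, DihedralGroup.r_mul_r, DihedralGroup.sr_mul_r]

lemma toDihedralGroup_ρ : toDihedralGroup ρ = DihedralGroup.r 1 := toGroup.of _
lemma toDihedralGroup_τ : toDihedralGroup τ = DihedralGroup.r (-1) := toGroup.of _
lemma toDihedralGroup_σ : toDihedralGroup σ = DihedralGroup.sr 0 := toGroup.of _

lemma toDihedralGroup_comp_dinfToG :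
    toDihedralGroup.comp dinfToG =
      (DihedralGroup.mapOfAddHom (AddMonoidHom.mulLeft 2)).comp Dinf.toDihedral := by
  refine ext fun j => ?_
  fin_cases j
  · change toDihedralGroup (dinfToG Dinf.r) = .mapOfAddHom _ (Dinf.toDihedral Dinf.r)
    rw [dinfToG_r, Dinf.toDihedral_r, map_pow, toDihedralGroup_ρ, DihedralGroup.r_one_pow]
    rfl
  · change toDihedralGroup (dinfToG Dinf.s) = .mapOfAddHom _ (Dinf.toDihedral Dinf.s)
    rw [dinfToG_s, Dinf.toDihedral_s, toDihedralGroup_σ]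
    rfl

lemma injective_toDihedralGroup_comp_dinfToG :
    Function.Injective (toDihedralGroup.comp dinfToG) := by
  rw [toDihedralGroup_comp_dinfToG]
  exact (DihedralGroup.mapOfAddHom_injective fun _ _ => mul_left_cancel₀ two_ne_zero).comp
    Dinf.toDihedral_injective

lemma toDihedralGroup_zmodTwoToG (b : Multiplicative (ZMod 2)) :
    toDihedralGroup (zmodTwoToG b) = 1 := by
  obtain rfl | rfl := Multiplicative.zmod_two_eq_one_or_ofAdd_one b
  · rw [map_one, map_one]
  · rw [zmodTwoToG_ofAdd_one, map_mul, toDihedralGroup_ρ, toDihedralGroup_τ,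
      DihedralGroup.r_mul_r, add_neg_cancel, DihedralGroup.r_zero]

lemma prodToG_injective : Function.Injective prodToG := by
  rw [injective_iff_map_eq_one]
  rintro ⟨a, b⟩ h
  have ha : a = 1 := by
    refine injective_toDihedralGroup_comp_dinfToG ?_
    simpa [prodToG_apply, toDihedralGroup_zmodTwoToG] using congrArg toDihedralGroup h
  subst ha
  obtain rfl | rfl := Multiplicative.zmod_two_eq_one_or_ofAdd_one b
  · rfl
  · rw [prodToG_apply, map_one, one_mul, zmodTwoToG_ofAdd_one] at h
    exact absurd h ρ_mul_τ_ne_one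

/-- the quasi-automorphism group in Example 6.8.
The subgroup `H` of `G = ⟨ρ, τ, σ | (ρτ)² = σ² = 1, ρτ = τρ, σρ = τσ⟩` generated by
`ρ², σ` and `ρτ` has index `2` in `G`, and `H ≅ D∞ × ℤ/2ℤ`. -/
theorem quasiAut_subgroup_index_two_and_structure :
    (Subgroup.closure {ρ ^ 2, σ, ρ * τ} : Subgroup G).index = 2 ∧
    Nonempty ((Subgroup.closure {ρ ^ 2, σ, ρ * τ} : Subgroup G) ≃*
      Dinf × Multiplicative (ZMod 2)) :=
  ⟨index_quasiAut,
    ⟨(MulEquiv.subgroupCongr range_prodToG).symm.trans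
      (MonoidHom.ofInjective prodToG_injective).symm⟩⟩

end ClusterModularAnnulus
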